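/- Let Λ be the n²×n² matrix with rows and columns indexed by pairs (k,l) ∈ {1,…,n}², defined by Λ^{(k,l)}_{(i,j)} = H + g^{ij} h_{ij} if (k,l) = (i,j) (no summation) and Λ^{(k,l)}_{(i,j)} = g^{ij} h_{kl} otherwise, where g and h are simultaneously diagonal at a point and H = Σᵢ gⁱⁱ hᵢᵢ. Replace, for each i, the column indexed (i,i) by the column E^{(k,l)}_i with entries u_i if k = l = i, u_l/2 if k ≠ l and k = i, u_k/2 if k ≠ l and l = i, and 0 otherwise. Then the determinant of the resulting matrix equals H^{n²−n} · ∏_{i=1}^n u_i. -/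
import Mathlib


/-- With `g` and `h` simultaneously diagonal and
`H = Σᵢ gⁱⁱ hᵢᵢ`, the `n² × n²` matrix `Λ^{(k,l)}_{(i,j)}` (equal to
`H + g^{ij} h_{ij}` if `(k,l) = (i,j)` and `g^{ij} h_{kl}` otherwise), with each
column indexed `(i,i)` replaced by the column `E^{(k,l)}_i` (entries `u_i` if
`k = l = i`, `u_l/2` if `k ≠ l, k = i`, `u_k/2` if `k ≠ l, l = i`, `0` else),
has determinant `H^{n²−n} ∏ᵢ uᵢ`. -/
theorem stmt11 {n : ℕ} (gd hd u : Fin n → ℝ) (hgd : ∀ i, 0 < gd i) :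
    let ginv : Fin n → Fin n → ℝ := fun i j => if i = j then gd i else 0
    let hm : Fin n → Fin n → ℝ := fun i j => if i = j then hd i else 0
    let H : ℝ := ∑ i, gd i * hd i
    let Λ : Matrix (Fin n × Fin n) (Fin n × Fin n) ℝ := fun kl ij =>
      if ij.1 = ij.2 then
        -- the replaced column E
        (if kl.1 = kl.2 ∧ kl.1 = ij.1 then u ij.1
         else if kl.1 ≠ kl.2 ∧ kl.1 = ij.1 then u kl.2 / 2
         else if kl.1 ≠ kl.2 ∧ kl.2 = ij.1 then u kl.1 / 2
         else 0)
      else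
        (if kl = ij then H + ginv ij.1 ij.2 * hm ij.1 ij.2
         else ginv ij.1 ij.2 * hm kl.1 kl.2)
    Λ.det = H ^ (n ^ 2 - n) * ∏ i, u i := by
  intro ginv hm H Λ
  have key := Matrix.twoBlockTriangular_det Λ (fun kl => kl.1 ≠ kl.2)
    (by
      intro kl hkl ij hij
      simp only [not_not] at hkl
      have hne : kl ≠ ij := by
        intro h; subst h; exact hij hkl
      simp only [Λ, ginv, hm, if_neg hij, if_neg hne, if_neg hij, zero_mul])
  -- nondiag block is H • 1
  have h1 : (Matrix.toSquareBlockProp Λ (fun kl => kl.1 ≠ kl.2)) =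
      Matrix.diagonal (fun _ => H) := by
    ext ⟨kl, hkl⟩ ⟨ij, hij⟩
    show Λ kl ij = _
    simp only [Λ, ginv, hm, Matrix.diagonal]
    rw [if_neg hij]
    by_cases h : kl = ij
    · subst h
      simp [hij, Subtype.ext_iff]
    · rw [if_neg h, if_neg hij, zero_mul, Matrix.of_apply]
      rw [if_neg (by simpa [Subtype.ext_iff] using h)]
  -- diag block is diagonal u
  have h2 : (Matrix.toSquareBlockProp Λ (fun kl => ¬ kl.1 ≠ kl.2)) =
      Matrix.diagonal (fun a : {a : Fin n × Fin n // ¬ a.1 ≠ a.2} => u a.1.1) := by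
    ext ⟨kl, hkl⟩ ⟨ij, hij⟩
    simp only [not_not] at hkl hij
    show Λ kl ij = _
    simp only [Λ, Matrix.diagonal]
    rw [if_pos hij]
    by_cases h : kl.1 = ij.1
    · rw [if_pos ⟨hkl, h⟩, Matrix.of_apply,
        if_pos (by apply Subtype.ext; exact Prod.ext h (hkl ▸ hij ▸ h)), h]
    · rw [if_neg (fun hc => h hc.2), if_neg (fun hc => hc.1 hkl),
        if_neg (fun hc => hc.1 hkl), Matrix.of_apply,
        if_neg (fun hc => h (congrArg Prod.fst (Subtype.ext_iff.mp hc)))]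
  let e : {a : Fin n × Fin n // ¬ a.1 ≠ a.2} ≃ Fin n :=
    ⟨fun a => a.1.1, fun i => ⟨(i, i), by simp⟩,
     fun a => Subtype.ext (Prod.ext rfl (not_not.mp a.2)),
     fun i => rfl⟩
  have cdiag : Fintype.card {a : Fin n × Fin n // ¬ a.1 ≠ a.2} = n := by
    rw [Fintype.card_congr e, Fintype.card_fin]
  have cnd : Fintype.card {a : Fin n × Fin n // a.1 ≠ a.2} = n ^ 2 - n := by
    have h3 := Fintype.card_subtype_compl (fun a : Fin n × Fin n => a.1 ≠ a.2)
    have h4 : Fintype.card (Fin n × Fin n) = n ^ 2 := by simp [sq]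
    have h5 := Fintype.card_subtype_le (fun a : Fin n × Fin n => a.1 ≠ a.2)
    rw [cdiag, h4] at h3
    rw [h4] at h5
    omega
  rw [key, h1, h2, Matrix.det_diagonal, Matrix.det_diagonal, Finset.prod_const,
    Finset.card_univ, cnd]
  congr 1
  exact Fintype.prod_equiv e _ _ (fun a => rfl)
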